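/- Let d ≥ 1 and let a_1, …, a_d, x be positive real numbers. Then, as m_1, …, m_d → ∞ (along the product filter atTop in all d variables), the d-fold Riemann sum (1/(2 m_1 ⋯ m_d)) · Σ_{i_1=1}^{m_1} ⋯ Σ_{i_d=1}^{m_d} ln( x^2 + Σ_{s=1}^{d} 4 a_s^2 cos^2( i_s π/(2 m_s + 1) ) ) converges to (2^{d-1}/π^d) · ∫_{[0,π/2]^d} ln( x^2 + Σ_{s=1}^{d} 4 a_s^2 cos^2 θ_s ) dθ_1 ⋯ dθ_d. (This limit is the free energy Φ_d(a_1,…,a_d,x) of the monopole-dimer model on d-dimensional grids with all even side lengths, since ln Z_{2m_1,…,2m_d} equals 2^{d-1} times the above sum.) -/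

import Mathlib

/-!
Up to the factor `2^(d-1)/π^d`, the Riemann sum is the integral over `[0, π/2]^d` of a step
function: the cube is cut into the boxes `∏ₛ ((iₛ - 1)π/(2mₛ), iₛπ/(2mₛ)]`, and on each box the
integrand is frozen at the node `(iₛπ/(2mₛ + 1))ₛ`, which lies in that box. As all `mₛ → ∞` these
step functions converge pointwise to the continuous integrand and stay bounded by its maximum on the
compact cube, so dominated convergence gives the limit.
-/

open MeasureTheory Filter Set Topology Real Function

/-- `[0, π/2]` is cut into the `n` cells `((i - 1)π/(2n), iπ/(2n)]`; `gridNode n t` is the node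
`iπ/(2n + 1)` of the cell containing `t`, which lies in that cell. -/
noncomputable def gridNode (n : ℕ) (t : ℝ) : ℝ :=
  ⌈2 * n * t / π⌉ * (π / (2 * n + 1))

lemma gridNode_eq_of_mem_Ioc {n i : ℕ} {t : ℝ} (hn : 0 < n)
    (ht : t ∈ Ioc ((i - 1) * (π / (2 * n))) (i * (π / (2 * n)))) :
    gridNode n t = i * π / (2 * n + 1) := by
  have hn' : (0 : ℝ) < n := by exact_mod_cast hn
  have hh : 0 < π / (2 * n) := by positivity
  have hceil : ⌈2 * n * t / π⌉ = i := by
    rw [show 2 * (n : ℝ) * t / π = t / (π / (2 * n)) by field_simp, Int.ceil_eq_iff]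
    push_cast
    exact ⟨(lt_div_iff₀ hh).2 ht.1, (div_le_iff₀ hh).2 ht.2⟩
  rw [gridNode, hceil]
  push_cast
  ring

lemma gridNode_mem_Icc (n : ℕ) {t : ℝ} (ht : t ∈ Icc 0 (π / 2)) :
    gridNode n t ∈ Icc 0 (π / 2) := by
  have hr0 : 0 ≤ 2 * n * t / π := by have := ht.1; positivity
  have hrn : 2 * n * t / π ≤ n := by
    rw [div_le_iff₀ pi_pos]
    nlinarith [ht.2, Nat.cast_nonneg (α := ℝ) n]
  have hc0 : (0 : ℝ) ≤ ⌈2 * n * t / π⌉ := by exact_mod_cast Int.ceil_nonneg hr0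
  have hcn : (⌈2 * n * t / π⌉ : ℝ) ≤ n := by exact_mod_cast Int.ceil_le.2 (by exact_mod_cast hrn)
  constructor
  · unfold gridNode
    positivity
  · calc gridNode n t ≤ n * (π / (2 * n + 1)) := by unfold gridNode; gcongr
      _ ≤ π / 2 := by
        rw [mul_div_assoc', div_le_div_iff₀ (by positivity) two_pos]
        nlinarith [pi_pos]

lemma abs_gridNode_sub_le (n : ℕ) (t : ℝ) : |gridNode n t - t| ≤ (π + |t|) / (2 * n + 1) := by
  set r := 2 * n * t / π
  have hden : (0 : ℝ) < 2 * n + 1 := by positivity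
  have hsplit : gridNode n t - t = ((⌈r⌉ - r) * π - t) / (2 * n + 1) := by
    simp only [gridNode, r]
    field_simp
    ring
  have hfrac : |(⌈r⌉ - r) * π| ≤ π := by
    rw [abs_mul, abs_of_pos pi_pos]
    exact mul_le_of_le_one_left pi_pos.le
      (abs_le.2 ⟨by linarith [Int.le_ceil r], by linarith [Int.ceil_lt_add_one r]⟩)
  rw [hsplit, abs_div, abs_of_pos hden]
  gcongr
  exact (abs_sub _ _).trans (by linarith)

lemma tendsto_gridNode (t : ℝ) : Tendsto (fun n : ℕ => gridNode n t) atTop (𝓝 t) := by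
  have hbound : Tendsto (fun n : ℕ => (π + |t|) / (2 * n + 1)) atTop (𝓝 0) :=
    tendsto_const_nhds.div_atTop <| tendsto_atTop_add_const_right _ 1 <|
      tendsto_natCast_atTop_atTop.const_mul_atTop two_pos
  simpa using (squeeze_zero_norm (fun n => abs_gridNode_sub_le n t) hbound).add_const t

lemma measurable_gridNode (n : ℕ) : Measurable (gridNode n) := by
  unfold gridNode
  fun_prop

lemma Ioc_zero_natCast_mul_eq_biUnion (n : ℕ) {h : ℝ} (hh : 0 ≤ h) :
    Ioc 0 (n * h) = ⋃ i ∈ Finset.Icc 1 n, Ioc ((i - 1) * h) (i * h) := by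
  induction n with
  | zero => simp
  | succ n ih =>
    rw [← Finset.insert_Icc_right_eq_Icc_add_one (by omega), Finset.set_biUnion_insert, ← ih]
    push_cast
    rw [add_sub_cancel_right, union_comm, Ioc_union_Ioc_eq_Ioc (by positivity) (by nlinarith)]

section Grid

variable {ι : Type*}

def gridCell (m f : ι → ℕ) : Set (ι → ℝ) :=
  univ.pi fun s => Ioc ((f s - 1) * (π / (2 * m s))) (f s * (π / (2 * m s)))

lemma measurableSet_gridCell [Countable ι] (m f : ι → ℕ) : MeasurableSet (gridCell m f) :=
  MeasurableSet.univ_pi fun _ => measurableSet_Ioc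

lemma volume_gridCell [Fintype ι] (m f : ι → ℕ) :
    volume (gridCell m f) = ENNReal.ofReal (∏ s, π / (2 * m s)) := by
  simp only [gridCell, volume_pi_pi, Real.volume_Ioc, ← sub_mul, sub_sub_cancel, one_mul]
  exact (ENNReal.ofReal_prod_of_nonneg fun s _ => by positivity).symm

lemma gridNode_eq_of_mem_gridCell {m f : ι → ℕ} {θ : ι → ℝ} (hm : ∀ s, 0 < m s)
    (hθ : θ ∈ gridCell m f) :
    (fun s => gridNode (m s) (θ s)) = fun s => f s * π / (2 * m s + 1) :=
  funext fun s => gridNode_eq_of_mem_Ioc (hm s) (hθ s (mem_univ s))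

lemma pairwise_disjoint_gridCell {m : ι → ℕ} (hm : ∀ s, 0 < m s) :
    Pairwise (Disjoint on gridCell m) := by
  intro f g hfg
  refine disjoint_left.2 fun θ hf hg => hfg (funext fun s => ?_)
  have := congrFun ((gridNode_eq_of_mem_gridCell hm hf).symm.trans
    (gridNode_eq_of_mem_gridCell hm hg)) s
  have hden : (2 * (m s : ℝ) + 1) ≠ 0 := by positivity
  simpa [div_left_inj' hden, pi_ne_zero] using this

lemma biUnion_gridCell [Fintype ι] [DecidableEq ι] {m : ι → ℕ} (hm : ∀ s, 0 < m s) :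
    ⋃ f ∈ Fintype.piFinset (fun s => Finset.Icc 1 (m s)), gridCell m f =
      univ.pi fun _ => Ioc 0 (π / 2) := by
  have hcells : ∀ s, Ioc 0 (π / 2) =
      ⋃ i ∈ Finset.Icc 1 (m s), Ioc ((i - 1) * (π / (2 * m s))) (i * (π / (2 * m s))) := by
    intro s
    have : (m s : ℝ) ≠ 0 := by exact_mod_cast (hm s).ne'
    rw [← Ioc_zero_natCast_mul_eq_biUnion _ (by positivity)]
    congr 1
    field_simp
  rw [show (fun _ : ι => Ioc 0 (π / 2)) = _ from funext hcells]
  exact Eq.trans (by simp [gridCell, Pi.le_def, forall_and]) (biUnion_univ_pi (fun s => (Finset.Icc 1 (m s) : Set ℕ)) _)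

end Grid

section RiemannSum

variable {ι : Type*} [Fintype ι]

theorem setIntegral_comp_gridNode [DecidableEq ι] (G : (ι → ℝ) → ℝ) {m : ι → ℕ} (hm : ∀ s, 0 < m s) :
    ∫ θ in univ.pi (fun _ => Icc 0 (π / 2)), G (fun s => gridNode (m s) (θ s)) =
      (∏ s, π / (2 * m s)) *
        ∑ f ∈ Fintype.piFinset (fun s => Finset.Icc 1 (m s)), G (fun s => f s * π / (2 * m s + 1)) := by
  have hconst : ∀ f, EqOn (fun θ => G (fun s => gridNode (m s) (θ s)))
      (fun _ => G (fun s => f s * π / (2 * m s + 1))) (gridCell m f) :=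
    fun f θ hθ => congrArg G (gridNode_eq_of_mem_gridCell hm hθ)
  have hcell : ∀ f, ∫ θ in gridCell m f, G (fun s => gridNode (m s) (θ s)) =
      (∏ s, π / (2 * m s)) * G (fun s => f s * π / (2 * m s + 1)) := fun f => by
    rw [setIntegral_congr_fun (measurableSet_gridCell m f) (hconst f), setIntegral_const,
      measureReal_def, volume_gridCell, ENNReal.toReal_ofReal (by positivity), smul_eq_mul]
  have hint : ∀ f, IntegrableOn (fun θ => G (fun s => gridNode (m s) (θ s))) (gridCell m f) :=
    fun f => (integrableOn_const (by simp [volume_gridCell])).congr_fun (hconst f).symm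
      (measurableSet_gridCell m f)
  have hbox : (univ.pi fun _ => Ioc 0 (π / 2) : Set (ι → ℝ)) =ᵐ[volume]
      univ.pi fun _ => Icc 0 (π / 2) := by
    rw [volume_pi]
    exact Measure.pi_Ioc_ae_eq_pi_Icc
  rw [← setIntegral_congr_set hbox, ← biUnion_gridCell hm,
    integral_biUnion_finset _ (fun f _ => measurableSet_gridCell m f)
      ((pairwise_disjoint_gridCell hm).set_pairwise _) (fun f _ => hint f), Finset.mul_sum]
  exact Finset.sum_congr rfl fun f _ => hcell f

theorem tendsto_setIntegral_comp_gridNode {G : (ι → ℝ) → ℝ} (hG : Continuous G) :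
    Tendsto (fun m : ι → ℕ =>
        ∫ θ in univ.pi (fun _ => Icc 0 (π / 2)), G (fun s => gridNode (m s) (θ s)))
      atTop (𝓝 (∫ θ in univ.pi (fun _ => Icc 0 (π / 2)), G θ)) := by
  set box : Set (ι → ℝ) := univ.pi fun _ => Icc 0 (π / 2)
  have hbox : IsCompact box := isCompact_univ_pi fun _ => isCompact_Icc
  obtain ⟨C, hC⟩ := hbox.exists_bound_of_continuousOn hG.continuousOn
  have hnode (m : ι → ℕ) (θ : ι → ℝ) (hθ : θ ∈ box) : (fun s => gridNode (m s) (θ s)) ∈ box :=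
    fun s _ => gridNode_mem_Icc (m s) (hθ s (mem_univ s))
  have hcoord (s : ι) : Tendsto (fun m : ι → ℕ => m s) atTop atTop :=
    tendsto_atTop_atTop_of_monotone (monotone_eval s) fun b => ⟨fun _ => b, le_rfl⟩
  refine tendsto_integral_filter_of_dominated_convergence (fun _ => C) ?_ ?_ ?_ ?_
  · exact Eventually.of_forall fun m => (hG.measurable.comp <| measurable_pi_lambda _
      fun s => (measurable_gridNode (m s)).comp (measurable_pi_apply s)).aestronglyMeasurable
  · exact Eventually.of_forall fun m =>
      ae_restrict_of_forall_mem hbox.measurableSet fun θ hθ => hC _ (hnode m θ hθ)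
  · exact integrableOn_const hbox.measure_lt_top.ne
  · exact ae_of_all _ fun θ => (hG.tendsto θ).comp <|
      tendsto_pi_nhds.2 fun s => (tendsto_gridNode (θ s)).comp (hcoord s)

theorem tendsto_gridRiemannSum [DecidableEq ι] {G : (ι → ℝ) → ℝ} (hG : Continuous G) :
    Tendsto (fun m : ι → ℕ => (∏ s, π / (2 * m s)) *
        ∑ f ∈ Fintype.piFinset (fun s => Finset.Icc 1 (m s)), G (fun s => f s * π / (2 * m s + 1)))
      atTop (𝓝 (∫ θ in univ.pi (fun _ => Icc 0 (π / 2)), G θ)) := by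
  refine (tendsto_setIntegral_comp_gridNode hG).congr' ?_
  filter_upwards [eventually_ge_atTop 1] with m hm
  exact setIntegral_comp_gridNode G fun s => hm s

end RiemannSum

theorem freeEnergyGrid (d : ℕ) (hd : 1 ≤ d) (a : Fin d → ℝ) (x : ℝ)
    (hx : 0 < x) :
    Filter.Tendsto
      (fun m : Fin d → ℕ =>
        (1 / (2 * ∏ s : Fin d, (m s : ℝ))) *
          ∑ f ∈ Fintype.piFinset (fun s : Fin d => Finset.Icc 1 (m s)),
            Real.log (x ^ 2 + ∑ s : Fin d,
              4 * a s ^ 2 * Real.cos ((f s : ℝ) * Real.pi / (2 * (m s : ℝ) + 1)) ^ 2))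
      Filter.atTop
      (nhds ((2 ^ (d - 1) / Real.pi ^ d) *
        ∫ θ : Fin d → ℝ in Set.univ.pi (fun _ => Set.Icc 0 (Real.pi / 2)),
          Real.log (x ^ 2 + ∑ s : Fin d, 4 * a s ^ 2 * Real.cos (θ s) ^ 2))) := by
  have hpos (θ : Fin d → ℝ) : 0 < x ^ 2 + ∑ s, 4 * a s ^ 2 * cos (θ s) ^ 2 :=
    add_pos_of_pos_of_nonneg (by positivity) (Finset.sum_nonneg fun s _ => by positivity)
  have hG : Continuous fun θ : Fin d → ℝ => log (x ^ 2 + ∑ s, 4 * a s ^ 2 * cos (θ s) ^ 2) :=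
    Continuous.log (by fun_prop) fun θ => (hpos θ).ne'
  have hweight (m : Fin d → ℕ) :
      2 ^ (d - 1) / π ^ d * ∏ s, π / (2 * (m s : ℝ)) = 1 / (2 * ∏ s, (m s : ℝ)) := by
    obtain ⟨e, rfl⟩ := Nat.exists_eq_add_of_le' hd
    simp only [Finset.prod_div_distrib, Finset.prod_mul_distrib, Finset.prod_const,
      Finset.card_univ, Fintype.card_fin, Nat.add_sub_cancel]
    rw [div_mul_div_cancel₀ (by positivity), pow_succ, mul_assoc,
      div_mul_cancel_left₀ (by positivity), one_div]
  refine ((tendsto_gridRiemannSum hG).const_mul (2 ^ (d - 1) / π ^ d)).congr fun m => ?_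
  rw [← mul_assoc, hweight]
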